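/- arXiv:2404.10670 — 8 statements merged into one kernel-verified Lean document; each statement's English description precedes it below -/
import Mathlib

section
/- Every cycle graph C_n (n ≥ 3) admits a 2-simultaneous interval representation, i.e., si(C_n) ≤ 2. -/
/-- `(a, b, L)` is a `d`-simultaneous interval representation of `G`:
each vertex `v` gets a nonempty open interval `(a v, b v)` and a label set
`L v ⊆ {1,…,d}`, and distinct vertices are adjacent iff both their intervals
and their label sets intersect. -/
def IsSIRep {V : Type*} (G : SimpleGraph V) (d : ℕ)
    (a b : V → ℝ) (L : V → Finset (Fin d)) : Prop :=
  (∀ v, a v < b v) ∧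
  ∀ u v : V, u ≠ v →
    (G.Adj u v ↔ (Set.Ioo (a u) (b u) ∩ Set.Ioo (a v) (b v)).Nonempty ∧
      (L u ∩ L v).Nonempty)

/-- The simultaneous interval number of `G`. -/
noncomputable def si {V : Type*} (G : SimpleGraph V) : ℕ :=
  sInf {d | ∃ a b L, IsSIRep G d a b L}

/-!
Put vertex `0` of `C_n` aside. The remaining vertices form a path `1, …, n - 1`, a unit
interval graph: give vertex `i` the interval `(i - 1, i + 1)` and label `1`. Vertex `0` gets an
interval containing all the others and label `0` alone, which it shares exactly with its two
neighbours `1` and `n - 1`; these carry both labels.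
-/

open SimpleGraph

theorem si_le_of_isSIRep {V : Type*} {G : SimpleGraph V} {d : ℕ} {a b : V → ℝ}
    {L : V → Finset (Fin d)} (h : IsSIRep G d a b L) : si G ≤ d :=
  Nat.sInf_le ⟨a, b, L, h⟩

theorem Fin.val_sub_eq_one_iff {n : ℕ} {i j : Fin n} (hij : i ≠ j) :
    (i - j).val = 1 ↔ i.val = j.val + 1 ∨ (i.val = 0 ∧ j.val = n - 1) := by
  have hij' : i.val ≠ j.val := Fin.val_ne_of_ne hij
  have := j.isLt
  rcases le_or_gt j i with hle | hlt
  · rw [Fin.coe_sub_iff_le.mpr hle]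
    omega
  · rw [Fin.coe_sub_iff_lt.mpr hlt]
    omega

theorem SimpleGraph.cycleGraph_adj_iff_val {n : ℕ} {u v : Fin n} (huv : u ≠ v) :
    (cycleGraph n).Adj u v ↔ u.val = v.val + 1 ∨ v.val = u.val + 1 ∨
      (u.val = 0 ∧ v.val = n - 1) ∨ (v.val = 0 ∧ u.val = n - 1) := by
  rw [cycleGraph_adj', Fin.val_sub_eq_one_iff huv, Fin.val_sub_eq_one_iff huv.symm]
  tauto

namespace CycleGraphSIRep

variable {n : ℕ}

def lower (v : Fin n) : ℤ := if v.val = 0 then -1 else v.val - 1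

def upper (v : Fin n) : ℤ := if v.val = 0 then n else v.val + 1

def labels (v : Fin n) : Finset (Fin 2) :=
  if v.val = 0 then {0} else if v.val = 1 ∨ v.val = n - 1 then {0, 1} else {1}

theorem lower_lt_upper (v : Fin n) : (lower v : ℝ) < upper v := by
  norm_cast
  unfold lower upper
  split_ifs <;> omega

theorem intervals_inter_nonempty_iff (u v : Fin n) :
    (Set.Ioo (lower u : ℝ) (upper u) ∩ Set.Ioo (lower v : ℝ) (upper v)).Nonempty ↔
      u.val = 0 ∨ v.val = 0 ∨ (u.val ≤ v.val + 1 ∧ v.val ≤ u.val + 1) := by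
  rw [Set.Ioo_inter_Ioo, Set.nonempty_Ioo, sup_lt_iff, lt_inf_iff, lt_inf_iff]
  norm_cast
  have := u.isLt
  have := v.isLt
  unfold lower upper
  split_ifs <;> omega

theorem labels_inter_nonempty_iff {u v : Fin n} (huv : u ≠ v) :
    (labels u ∩ labels v).Nonempty ↔
      (u.val = 0 → v.val = 1 ∨ v.val = n - 1) ∧ (v.val = 0 → u.val = 1 ∨ u.val = n - 1) := by
  have := Fin.val_ne_of_ne huv
  unfold labels
  split_ifs <;> simp_all

theorem isSIRep_cycleGraph (n : ℕ) :
    IsSIRep (cycleGraph n) 2 (fun v => lower v) (fun v => upper v) labels := by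
  refine ⟨lower_lt_upper, fun u v huv => ?_⟩
  rw [cycleGraph_adj_iff_val huv, intervals_inter_nonempty_iff, labels_inter_nonempty_iff huv]
  omega

end CycleGraphSIRep

theorem si_cycleGraph_le_two_general (n : ℕ) :
    si (SimpleGraph.cycleGraph n) ≤ 2 :=
  si_le_of_isSIRep (CycleGraphSIRep.isSIRep_cycleGraph n)

/-- Every cycle `C_n` with `n ≥ 3` has simultaneous interval number at most 2. -/
theorem si_cycleGraph_le_two (n : ℕ) (hn : 3 ≤ n) :
    si (SimpleGraph.cycleGraph n) ≤ 2 :=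
  si_cycleGraph_le_two_general n
end

section
/- Let G be the complete 3-partite graph with three parts each of size n. Then si(G) = n², which also equals |V(G)|²/9 and |E(G)|/3. -/
/-- The complete 3-partite graph with three parts of size `n`. -/
def completeThreePartite (n : ℕ) : SimpleGraph (Fin 3 × Fin n) :=
  SimpleGraph.fromRel (fun u v => u.1 ≠ v.1)

open Finset Function

namespace IsSIRep

variable {V : Type*} {G : SimpleGraph V} {d : ℕ} {a b : V → ℝ} {L : V → Finset (Fin d)}

theorem si_eq (h : IsSIRep G d a b L)
    (hle : ∀ d' a' b' L', IsSIRep G d' a' b' L' → d ≤ d') : si G = d :=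
  le_antisymm (Nat.sInf_le ⟨a, b, L, h⟩)
    (le_csInf ⟨d, a, b, L, h⟩ fun _ ⟨a', b', L', h'⟩ => hle _ a' b' L' h')

theorem adj_iff_inter_nonempty_of_adj_of_forall_le (h : IsSIRep G d a b L) {v₀ u w : V}
    (hmin : ∀ v, b v₀ ≤ b v) (hu : G.Adj v₀ u) (hw : G.Adj v₀ w) (huw : u ≠ w) :
    G.Adj u w ↔ (L u ∩ L w).Nonempty := by
  have lt_end : ∀ {v}, G.Adj v₀ v → a v < b v₀ := fun {v} hv => by
    obtain ⟨⟨t, ht₀, ht⟩, -⟩ := (h.2 v₀ v hv.ne).1 hv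
    exact ht.1.trans ht₀.2
  obtain ⟨t, hat, htb⟩ := exists_between (max_lt (lt_end hu) (lt_end hw))
  have hmeet : (Set.Ioo (a u) (b u) ∩ Set.Ioo (a w) (b w)).Nonempty :=
    ⟨t, ⟨(le_max_left _ _).trans_lt hat, htb.trans_le (hmin u)⟩,
      ⟨(le_max_right _ _).trans_lt hat, htb.trans_le (hmin w)⟩⟩
  rw [h.2 u w huw, and_iff_right hmeet]

end IsSIRep

theorem exists_isSIRep_of_labels {V α : Type*} [Fintype α] [DecidableEq α] {G : SimpleGraph V}
    (L : V → Finset α) (hL : ∀ u v, u ≠ v → (G.Adj u v ↔ (L u ∩ L v).Nonempty)) :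
    ∃ a b L', IsSIRep G (Fintype.card α) a b L' := by
  refine ⟨fun _ => 0, fun _ => 1, fun v => (L v).map (Fintype.equivFin α).toEmbedding,
    fun _ => zero_lt_one, fun u v huv => ?_⟩
  rw [Set.inter_self, ← map_inter, map_nonempty, hL u v huv]
  exact (and_iff_right (Set.nonempty_Ioo.2 zero_lt_one)).symm

theorem Fintype.card_mul_card_le_of_inter_nonempty {ι κ α : Type*} [Fintype ι] [Fintype κ]
    [Fintype α] [DecidableEq α] {A : ι → Finset α} {B : κ → Finset α}
    (hA : Pairwise (Disjoint on A)) (hB : Pairwise (Disjoint on B))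
    (hAB : ∀ i j, (A i ∩ B j).Nonempty) :
    Fintype.card ι * Fintype.card κ ≤ Fintype.card α := by
  choose f hf using fun p : ι × κ => hAB p.1 p.2
  simp only [mem_inter] at hf
  rw [← Fintype.card_prod]
  refine Fintype.card_le_of_injective f fun p q hpq => Prod.ext ?_ ?_
  · exact hA.eq (not_disjoint_iff.2 ⟨f p, (hf p).1, hpq ▸ (hf q).1⟩)
  · exact hB.eq (not_disjoint_iff.2 ⟨f p, (hf p).2, hpq ▸ (hf q).2⟩)

theorem Fintype.exists_ne_ne_of_two_lt_card {κ : Type*} [Fintype κ]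
    (hκ : 2 < Fintype.card κ) (p : κ) : ∃ q r, q ≠ p ∧ r ≠ p ∧ q ≠ r := by
  classical
  have : 1 < #(univ.erase p) := by rw [card_erase_of_mem (mem_univ p), card_univ]; omega
  obtain ⟨q, hq, r, hr, hqr⟩ := Finset.one_lt_card.1 this
  exact ⟨q, r, ne_of_mem_erase hq, ne_of_mem_erase hr, hqr⟩

section Multipartite

variable {κ β : Type*} {G : SimpleGraph (κ × β)}

theorem sq_card_le_of_isSIRep [Fintype κ] [Fintype β]
    (hG : ∀ u v, G.Adj u v ↔ u.1 ≠ v.1) (hκ : 2 < Fintype.card κ) {d : ℕ} {a b : κ × β → ℝ}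
    {L : κ × β → Finset (Fin d)} (h : IsSIRep G d a b L) : Fintype.card β ^ 2 ≤ d := by
  cases isEmpty_or_nonempty β
  · simp
  have : Nonempty κ := Fintype.card_pos_iff.1 (by omega)
  obtain ⟨v₀, -, hmin⟩ := exists_min_image univ b univ_nonempty
  obtain ⟨q, r, hq, hr, hqr⟩ := Fintype.exists_ne_ne_of_two_lt_card hκ v₀.1
  have adj_iff : ∀ {s t : κ} (i j : β), s ≠ v₀.1 → t ≠ v₀.1 → (s, i) ≠ (t, j) →
      (G.Adj (s, i) (t, j) ↔ (L (s, i) ∩ L (t, j)).Nonempty) := fun i j hs ht =>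
    h.adj_iff_inter_nonempty_of_adj_of_forall_le (fun v => hmin v (mem_univ v))
      ((hG _ _).2 hs.symm) ((hG _ _).2 ht.symm)
  have disjoint_of_ne : ∀ {s}, s ≠ v₀.1 → Pairwise (Disjoint on fun i => L (s, i)) :=
    fun {s} hs i j hij => by
      by_contra hmeet
      have hadj := (adj_iff i j hs hs (by simpa using hij)).2
        (not_disjoint_iff_nonempty_inter.1 hmeet)
      exact (hG _ _).1 hadj rfl
  rw [sq, ← Fintype.card_fin d]
  exact Fintype.card_mul_card_le_of_inter_nonempty (disjoint_of_ne hq) (disjoint_of_ne hr)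
    fun i j => (adj_iff i j hq hr (by simp [hqr])).1 ((hG _ _).2 hqr)

theorem exists_isSIRep_of_surjective_pair {α : Type*} [Fintype α]
    (hG : ∀ u v, G.Adj u v ↔ u.1 ≠ v.1) (f : κ → α → β)
    (hf : ∀ q r, q ≠ r → Surjective fun x => (f q x, f r x)) :
    ∃ a b L, IsSIRep G (Fintype.card α) a b L := by
  classical
  refine exists_isSIRep_of_labels (fun u => {x | f u.1 x = u.2}) fun u v huv => ?_
  simp only [hG, ← filter_and, filter_nonempty_iff, mem_univ, true_and]
  refine ⟨fun hne => by simpa [Prod.ext_iff] using hf _ _ hne (u.2, v.2), ?_⟩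
  rintro ⟨x, hxu, hxv⟩ heq
  exact huv (Prod.ext heq (hxu.symm.trans (heq ▸ hxv)))

theorem two_mul_ncard_edgeSet [Fintype κ] [Fintype β]
    (hG : ∀ u v, G.Adj u v ↔ u.1 ≠ v.1) :
    2 * G.edgeSet.ncard = Fintype.card κ * (Fintype.card κ - 1) * Fintype.card β ^ 2 := by
  classical
  have hdeg : ∀ v, G.degree v = (Fintype.card κ - 1) * Fintype.card β := fun v => by
    have : G.neighborFinset v = (univ.erase v.1) ×ˢ univ := by
      ext u; simp [hG, ne_comm]
    rw [← G.card_neighborFinset_eq_degree, this, card_product, card_erase_of_mem (mem_univ _),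
      card_univ, card_univ]
  rw [← G.coe_edgeFinset, Set.ncard_coe_finset, ← G.sum_degrees_eq_twice_card_edges]
  simp only [hdeg, sum_const, card_univ, Fintype.card_prod, smul_eq_mul]
  ring

end Multipartite

theorem completeThreePartite_adj {n : ℕ} (u v : Fin 3 × Fin n) :
    (completeThreePartite n).Adj u v ↔ u.1 ≠ v.1 := by
  rw [completeThreePartite, SimpleGraph.fromRel_adj, ne_comm (a := v.1), or_self]
  exact and_iff_right_of_imp (ne_of_apply_ne Prod.fst)

def gridCoord (n : ℕ) : Fin 3 → Fin n × Fin n → Fin n :=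
  ![Prod.fst, Prod.snd, fun x => x.2 - x.1]

theorem gridCoord_surjective_pair {n : ℕ} {q r : Fin 3} (hqr : q ≠ r) :
    Surjective fun x => (gridCoord n q x, gridCoord n r x) := by
  rintro ⟨i, j⟩
  have : NeZero n := NeZero.of_pos i.pos
  fin_cases q <;> fin_cases r <;> simp [gridCoord, Prod.ext_iff] at hqr ⊢
  exacts [⟨_, add_sub_cancel_right _ _⟩, ⟨_, sub_sub_cancel _ _⟩, ⟨_, add_sub_cancel_right _ _⟩,
    ⟨_, sub_sub_cancel _ _⟩]

/-- For the complete 3-partite graph `G` with parts of equal size `n`,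
`si G = n²`, which also equals `|V(G)|²/9` and `|E(G)|/3`. -/
theorem si_completeThreePartite (n : ℕ) :
    si (completeThreePartite n) = n ^ 2 ∧
    n ^ 2 = (Fintype.card (Fin 3 × Fin n)) ^ 2 / 9 ∧
    n ^ 2 = (completeThreePartite n).edgeSet.ncard / 3 := by
  refine ⟨?_, by simp [mul_pow], ?_⟩
  · obtain ⟨a, b, L, h⟩ := exists_isSIRep_of_surjective_pair completeThreePartite_adj
      (gridCoord n) fun _ _ => gridCoord_surjective_pair
    have hκ : 2 < Fintype.card (Fin 3) := by simp
    rw [h.si_eq fun _ _ _ _ h' => by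
      simpa [sq] using sq_card_le_of_isSIRep completeThreePartite_adj hκ h']
    simp [sq]
  · have := two_mul_ncard_edgeSet (completeThreePartite_adj (n := n))
    simp only [Fintype.card_fin] at this
    omega
end

section
/- For the complete bipartite graph K_{m,n} with 1 ≤ m ≤ n, the simultaneous interval number equals m, i.e., si(K_{m,n}) = min{m,n}. -/
open Set

theorem Fintype.card_le_of_pairwise_disjoint {ι α : Type*} [Fintype ι] [Fintype α]
    (S : ι → Finset α) (hne : ∀ i, (S i).Nonempty)
    (hS : Pairwise fun i j ↦ Disjoint (S i) (S j)) :
    Fintype.card ι ≤ Fintype.card α :=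
  Fintype.card_le_of_injective (fun i ↦ (hne i).choose) fun i j hij ↦
    hS.eq <| Finset.not_disjoint_iff.2
      ⟨_, (hne i).choose_spec,
        (show (hne i).choose = (hne j).choose from hij) ▸ (hne j).choose_spec⟩

theorem Set.le_or_le_of_not_nonempty_Ioo_inter {α : Type*} [LinearOrder α] [DenselyOrdered α]
    {a₁ b₁ a₂ b₂ : α} (h₁ : a₁ < b₁) (h₂ : a₂ < b₂)
    (h : ¬(Ioo a₁ b₁ ∩ Ioo a₂ b₂).Nonempty) :
    b₁ ≤ a₂ ∨ b₂ ≤ a₁ := by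
  rw [Ioo_inter_Ioo, nonempty_Ioo, not_lt, inf_le_iff, le_sup_iff, le_sup_iff] at h
  rcases h with (h | h) | (h | h)
  · exact absurd h h₁.not_ge
  · exact .inl h
  · exact .inr h
  · exact absurd h h₂.not_ge

theorem Set.mem_Ioo_of_meets_of_le {α : Type*} [LinearOrder α] {p₁ q₁ p₂ q₂ c e : α}
    (h₁ : (Ioo p₁ q₁ ∩ Ioo c e).Nonempty) (h₂ : (Ioo p₂ q₂ ∩ Ioo c e).Nonempty)
    (hq : q₁ ≤ p₂) :
    q₁ ∈ Ioo c e := by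
  obtain ⟨x, hx, hxc⟩ := h₁
  obtain ⟨y, hy, hyc⟩ := h₂
  exact ordConnected_Ioo.out hxc hyc ⟨hx.2.le, hq.trans hy.1.le⟩

def SimpleGraph.completeBipartiteGraphComm (α β : Type*) :
    completeBipartiteGraph α β ≃g completeBipartiteGraph β α where
  toEquiv := Equiv.sumComm α β
  map_rel_iff' := by rintro (_ | _) (_ | _) <;> simp

section

variable {V : Type*} {G : SimpleGraph V} {d : ℕ} {a b : V → ℝ} {L : V → Finset (Fin d)}

theorem si_le (h : IsSIRep G d a b L) : si G ≤ d :=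
  Nat.sInf_le ⟨a, b, L, h⟩

theorem exists_isSIRep_si (h : IsSIRep G d a b L) : ∃ a b L, IsSIRep G (si G) a b L :=
  Nat.sInf_mem (s := {d | ∃ a b L, IsSIRep G d a b L}) ⟨d, a, b, L, h⟩

namespace IsSIRep

theorem comap {W : Type*} {H : SimpleGraph W} (h : IsSIRep G d a b L) (f : H ↪g G) :
    IsSIRep H d (a ∘ f) (b ∘ f) (L ∘ f) :=
  ⟨fun v ↦ h.1 (f v), fun _ _ huv ↦ f.map_adj_iff.symm.trans (h.2 _ _ (f.injective.ne huv))⟩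

theorem intervals_meet_of_adj (h : IsSIRep G d a b L) {u v : V} (huv : G.Adj u v) :
    (Ioo (a u) (b u) ∩ Ioo (a v) (b v)).Nonempty :=
  ((h.2 u v huv.ne).1 huv).1

theorem labels_nonempty_of_adj (h : IsSIRep G d a b L) {u v : V} (huv : G.Adj u v) :
    (L u).Nonempty :=
  ((h.2 u v huv.ne).1 huv).2.mono Finset.inter_subset_left

theorem disjoint_labels (h : IsSIRep G d a b L) {u v : V} (huv : u ≠ v) (hadj : ¬G.Adj u v)
    (hI : (Ioo (a u) (b u) ∩ Ioo (a v) (b v)).Nonempty) : Disjoint (L u) (L v) :=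
  Finset.disjoint_iff_inter_eq_empty.2 <| Finset.not_nonempty_iff_eq_empty.1 fun hL ↦
    hadj ((h.2 u v huv).2 ⟨hI, hL⟩)

theorem card_le {ι : Type*} [Fintype ι] (h : IsSIRep G d a b L) (f : ι → V)
    (hf : Function.Injective f) (hadj : Pairwise fun i j ↦ ¬G.Adj (f i) (f j))
    (hI : Pairwise fun i j ↦ (Ioo (a (f i)) (b (f i)) ∩ Ioo (a (f j)) (b (f j))).Nonempty)
    (hL : ∀ i, (L (f i)).Nonempty) : Fintype.card ι ≤ d := by
  simpa using Fintype.card_le_of_pairwise_disjoint (L ∘ f) hL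
    fun i j hij ↦ h.disjoint_labels (hf.ne hij) (hadj hij) (hI hij)

end IsSIRep

end

theorem IsSIRep.min_card_le {α β : Type*} [Fintype α] [Fintype β] {d : ℕ}
    {a b : α ⊕ β → ℝ} {L : α ⊕ β → Finset (Fin d)}
    (h : IsSIRep (completeBipartiteGraph α β) d a b L) :
    min (Fintype.card α) (Fintype.card β) ≤ d := by
  have hadj (i : α) (j : β) : (completeBipartiteGraph α β).Adj (.inl i) (.inr j) := by simp
  by_cases hI : Pairwise fun i i' : α ↦
      (Ioo (a (.inl i)) (b (.inl i)) ∩ Ioo (a (.inl i')) (b (.inl i'))).Nonempty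
  · rcases isEmpty_or_nonempty β with hβ | ⟨⟨j⟩⟩
    · simp
    · exact min_le_of_left_le <| h.card_le Sum.inl Sum.inl_injective (by simp [Pairwise]) hI
        fun i ↦ h.labels_nonempty_of_adj (hadj i j)
  · obtain ⟨p, q, hpq⟩ : ∃ p q : α, b (.inl p) ≤ a (.inl q) := by
      obtain ⟨i, i', -, hii'⟩ : ∃ i i' : α, i ≠ i' ∧ _ := by simpa [Pairwise] using hI
      rcases le_or_le_of_not_nonempty_Ioo_inter (h.1 _) (h.1 _) hii' with hle | hle
      exacts [⟨i, i', hle⟩, ⟨i', i, hle⟩]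
    have hmem (j : β) : b (.inl p) ∈ Ioo (a (.inr j)) (b (.inr j)) :=
      mem_Ioo_of_meets_of_le (h.intervals_meet_of_adj (hadj p j))
        (h.intervals_meet_of_adj (hadj q j)) hpq
    exact min_le_of_right_le <| h.card_le Sum.inr Sum.inr_injective (by simp [Pairwise])
      (fun j j' _ ↦ ⟨_, hmem j, hmem j'⟩) fun j ↦ h.labels_nonempty_of_adj (hadj p j).symm

theorem exists_isSIRep_completeBipartiteGraph (α β : Type*) [Fintype α] [Fintype β] :
    ∃ a b L, IsSIRep (completeBipartiteGraph α β) (Fintype.card α) a b L := by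
  set e := Fintype.equivFin α
  set k : β → ℕ := fun j ↦ Fintype.equivFin β j
  have hk (j : β) : (k j : ℝ) + 1 ≤ Fintype.card β := by
    exact_mod_cast (Fintype.equivFin β j).isLt
  have hk_inj : Function.Injective k := Fin.val_injective.comp (Fintype.equivFin β).injective
  have hmeet (j : β) :
      (Ioo 0 ((Fintype.card β : ℝ) + 1) ∩ Ioo (k j : ℝ) (k j + 1)).Nonempty :=
    ⟨k j + 1 / 2, ⟨by positivity, by linarith [hk j]⟩, by linarith, by linarith⟩
  refine ⟨Sum.elim (fun _ ↦ 0) (fun j ↦ k j),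
    Sum.elim (fun _ ↦ Fintype.card β + 1) (fun j ↦ k j + 1),
    Sum.elim (fun i ↦ {e i}) (fun _ ↦ Finset.univ), fun v ↦ ?_, fun u v huv ↦ ?_⟩
  · rcases v with i | j
    · exact (by positivity : (0 : ℝ) < Fintype.card β + 1)
    · exact lt_add_one _
  rcases u with i | j <;> rcases v with i' | j'
  · have hii' : e i ≠ e i' := e.injective.ne (by simpa using huv)
    simp [hii']
  · simpa using hmeet j'
  · simpa [Set.inter_comm] using hmeet j
  · have hjj' : (k j : ℤ) ≠ k j' := by exact_mod_cast hk_inj.ne (by simpa using huv)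
    have hdisj := Set.pairwise_disjoint_Ioo_intCast ℝ hjj'
    simp only [Function.onFun, Int.cast_natCast] at hdisj
    simp [hdisj.inter_eq]

theorem si_completeBipartiteGraph_eq_min_card (α β : Type*) [Fintype α] [Fintype β] :
    si (completeBipartiteGraph α β) = min (Fintype.card α) (Fintype.card β) := by
  obtain ⟨a, b, L, hα⟩ := exists_isSIRep_completeBipartiteGraph α β
  obtain ⟨_, _, _, hβ⟩ := exists_isSIRep_completeBipartiteGraph β α
  obtain ⟨_, _, _, hsi⟩ := exists_isSIRep_si hα
  refine le_antisymm (le_min (si_le hα) (si_le (hβ.comap ?_))) hsi.min_card_le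
  exact (SimpleGraph.completeBipartiteGraphComm α β).toEmbedding

theorem si_completeBipartiteGraph_general (m n : ℕ) :
    si (completeBipartiteGraph (Fin m) (Fin n)) = min m n := by
  simpa using si_completeBipartiteGraph_eq_min_card (Fin m) (Fin n)

/-- For `1 ≤ m ≤ n`, the complete bipartite graph `K_{m,n}` has simultaneous
interval number `min m n`. -/
theorem si_completeBipartiteGraph (m n : ℕ) (h1 : 1 ≤ m) (h2 : m ≤ n) :
    si (completeBipartiteGraph (Fin m) (Fin n)) = min m n :=
  si_completeBipartiteGraph_general m n
end

section
/- If G is the complement of a perfect matching on n vertices (n even, n ≥ 2), i.e., the graph obtained from K_n by deleting a perfect matching, then si(G) ≥ log₂(n − 1). -/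
/-- The complement of a perfect matching on `2k` vertices: the pairs
`(i,0),(i,1)` are the non-edges. -/
def complementOfMatching (k : ℕ) : SimpleGraph (Fin k × Fin 2) :=
  SimpleGraph.fromRel (fun u v => u.1 ≠ v.1)

/-!
Two matched vertices are non-adjacent, so their intervals or their label sets are disjoint.
If vertices `u`, `v` of different classes had equal label sets, each would share a label with its
own partner (through the other), so both classes would have disjoint intervals; but the four
intervals of two classes form an induced 4-cycle, which interval graphs do not contain. Hence label
sets coincide only inside the (at most one) class with disjoint intervals, and the label map takes
at least `2k - 1` distinct values among the `2 ^ d` subsets of `Fin d`.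
-/

open Set

/-- Both `Ioo c d` and `Ioo c' d'` contain the gap between the two disjoint intervals. -/
theorem Ioo_inter_Ioo_nonempty_of_meet_disjoint {α : Type*} [LinearOrder α] [DenselyOrdered α]
    {a b a' b' c d c' d' : α} (hdisj : ¬(Ioo a b ∩ Ioo a' b').Nonempty)
    (h₁ : (Ioo a b ∩ Ioo c d).Nonempty) (h₂ : (Ioo a' b' ∩ Ioo c d).Nonempty)
    (h₃ : (Ioo a b ∩ Ioo c' d').Nonempty) (h₄ : (Ioo a' b' ∩ Ioo c' d').Nonempty) :
    (Ioo c d ∩ Ioo c' d').Nonempty := by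
  simp only [Ioo_inter_Ioo, nonempty_Ioo, max_lt_iff, lt_min_iff, not_and_or, not_lt] at *
  grind

namespace IsSIRep

variable {V : Type*} {G : SimpleGraph V} {d : ℕ} {a b : V → ℝ} {L : V → Finset (Fin d)}
  {u u' v v' : V}

theorem nonempty_of_adj (h : IsSIRep G d a b L) (huv : G.Adj u v) :
    (Ioo (a u) (b u) ∩ Ioo (a v) (b v)).Nonempty ∧ (L u ∩ L v).Nonempty :=
  (h.2 u v huv.ne).1 huv

theorem not_Ioo_inter_nonempty_of_not_adj (h : IsSIRep G d a b L) (huv : u ≠ v)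
    (hadj : ¬G.Adj u v) (hL : (L u ∩ L v).Nonempty) :
    ¬(Ioo (a u) (b u) ∩ Ioo (a v) (b v)).Nonempty :=
  fun hI => hadj ((h.2 u v huv).2 ⟨hI, hL⟩)

theorem Ioo_inter_nonempty_of_four_cycle (h : IsSIRep G d a b L) (huv : G.Adj u v)
    (huv' : G.Adj u v') (hu'v : G.Adj u' v) (hu'v' : G.Adj u' v')
    (hu : ¬(Ioo (a u) (b u) ∩ Ioo (a u') (b u')).Nonempty) :
    (Ioo (a v) (b v) ∩ Ioo (a v') (b v')).Nonempty :=
  Ioo_inter_Ioo_nonempty_of_meet_disjoint hu (h.nonempty_of_adj huv).1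
    (h.nonempty_of_adj hu'v).1 (h.nonempty_of_adj huv').1 (h.nonempty_of_adj hu'v').1

end IsSIRep

/-- Every finite graph has a representation: give each edge its own label and every vertex the
interval `(0, 1)`. -/
theorem exists_isSIRep {V : Type*} [Finite V] (G : SimpleGraph V) :
    ∃ d a b L, IsSIRep G d a b L := by
  classical
  have := Fintype.ofFinite V
  let e := Fintype.equivFin (Sym2 V)
  refine ⟨_, fun _ => 0, fun _ => 1, fun v => {j | e.symm j ∈ G.edgeSet ∧ v ∈ e.symm j},
    fun _ => zero_lt_one, fun u v huv => ?_⟩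
  have hI : (Ioo (0 : ℝ) 1 ∩ Ioo 0 1).Nonempty := by simp
  simp only [hI, true_and, Finset.Nonempty, Finset.mem_inter, Finset.mem_filter,
    Finset.mem_univ]
  constructor
  · intro hadj
    have hedge : e.symm (e s(u, v)) ∈ G.edgeSet := by simpa using hadj
    exact ⟨e s(u, v), ⟨hedge, by simp⟩, hedge, by simp⟩
  · rintro ⟨j, ⟨hj, hu⟩, -, hv⟩
    rw [(Sym2.mem_and_mem_iff huv).1 ⟨hu, hv⟩] at hj
    exact hj

namespace complementOfMatching

variable {k d : ℕ} {a b : Fin k × Fin 2 → ℝ} {L : Fin k × Fin 2 → Finset (Fin d)}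
  {u u' v v' : Fin k × Fin 2}

@[simp]
theorem adj_iff : (complementOfMatching k).Adj u v ↔ u.1 ≠ v.1 := by
  simp only [complementOfMatching, SimpleGraph.fromRel_adj, ne_eq, Prod.ext_iff]
  grind

theorem eq_of_fst_eq_of_ne (hu : u.1 = u'.1) (hv : u.1 = v.1) (hu' : u ≠ u') (hv' : u ≠ v) :
    u' = v := by
  have h₁ : u.2 ≠ u'.2 := fun h => hu' (Prod.ext hu h)
  have h₂ : u.2 ≠ v.2 := fun h => hv' (Prod.ext hv h)
  exact Prod.ext (hu.symm.trans hv) (by omega)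

theorem exists_ne_fst_eq (u : Fin k × Fin 2) : ∃ u', u'.1 = u.1 ∧ u ≠ u' :=
  ⟨(u.1, u.2 + 1), rfl, fun h => by simpa using congrArg Prod.snd h⟩

theorem fst_eq_of_not_Ioo_inter_nonempty (h : IsSIRep (complementOfMatching k) d a b L)
    (hu : u'.1 = u.1) (hv : v'.1 = v.1)
    (hIu : ¬(Ioo (a u) (b u) ∩ Ioo (a u') (b u')).Nonempty)
    (hIv : ¬(Ioo (a v) (b v) ∩ Ioo (a v') (b v')).Nonempty) : u.1 = v.1 := by
  by_contra huv
  exact hIv (h.Ioo_inter_nonempty_of_four_cycle (adj_iff.2 huv) (by simp [hv, huv])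
    (by simp [hu, huv]) (by simp [hu, hv, huv]) hIu)

theorem fst_eq_and_not_Ioo_inter_nonempty_of_labels_eq (hk : 2 ≤ k)
    (h : IsSIRep (complementOfMatching k) d a b L) (huv : u ≠ v) (hL : L u = L v) :
    u.1 = v.1 ∧ ¬(Ioo (a u) (b u) ∩ Ioo (a v) (b v)).Nonempty := by
  have hsplit : ∀ x y, x.1 ≠ y.1 → L x = L y →
      ∃ x', x'.1 = x.1 ∧ ¬(Ioo (a x) (b x) ∩ Ioo (a x') (b x')).Nonempty := by
    intro x y hxy hLxy
    obtain ⟨x', hx', hxx'⟩ := exists_ne_fst_eq x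
    refine ⟨x', hx', h.not_Ioo_inter_nonempty_of_not_adj hxx' (by simp [hx']) ?_⟩
    rw [hLxy]
    exact (h.nonempty_of_adj (by simp [hx', hxy.symm])).2
  have hfst : u.1 = v.1 := by
    by_contra hne
    obtain ⟨u', hu', hIu⟩ := hsplit u v hne hL
    obtain ⟨v', hv', hIv⟩ := hsplit v u (Ne.symm hne) hL.symm
    exact hne (fst_eq_of_not_Ioo_inter_nonempty h hu' hv' hIu hIv)
  refine ⟨hfst, h.not_Ioo_inter_nonempty_of_not_adj huv (by simp [hfst]) ?_⟩
  obtain ⟨i, hi⟩ := Fintype.exists_ne_of_one_lt_card (by rw [Fintype.card_fin]; omega) u.1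
  rw [← hL, Finset.inter_self]
  exact (h.nonempty_of_adj (u := u) (v := (i, 0)) (by simpa using hi.symm)).2.mono
    Finset.inter_subset_left

/-- `w` lies in the class whose two intervals are disjoint, if there is one. -/
theorem exists_injOn_compl_singleton (hk : 2 ≤ k)
    (h : IsSIRep (complementOfMatching k) d a b L) : ∃ w, InjOn L {w}ᶜ := by
  by_cases hw : ∃ w w', w'.1 = w.1 ∧ ¬(Ioo (a w) (b w) ∩ Ioo (a w') (b w')).Nonempty
  · obtain ⟨w, w', hw', hIw⟩ := hw
    refine ⟨w, fun p hp q hq hpq => ?_⟩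
    by_contra hne
    obtain ⟨hfst, hI⟩ := fst_eq_and_not_Ioo_inter_nonempty_of_labels_eq hk h hne hpq
    have hpw : p.1 = w.1 := fst_eq_of_not_Ioo_inter_nonempty h hfst.symm hw' hI hIw
    exact hq (eq_of_fst_eq_of_ne hfst hpw hne hp)
  · push Not at hw
    refine ⟨(⟨0, by omega⟩, 0), fun p _ q _ hpq => ?_⟩
    by_contra hne
    obtain ⟨hfst, hI⟩ := fst_eq_and_not_Ioo_inter_nonempty_of_labels_eq hk h hne hpq
    exact hI (hw p q hfst.symm)

theorem two_mul_sub_one_le_two_pow (h : IsSIRep (complementOfMatching k) d a b L) :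
    2 * k - 1 ≤ 2 ^ d := by
  rcases lt_or_ge k 2 with hk | hk
  · have := Nat.one_le_two_pow (n := d)
    omega
  obtain ⟨w, hw⟩ := exists_injOn_compl_singleton hk h
  calc 2 * k - 1 = (Finset.univ.erase w).card := by simp [Finset.card_erase_of_mem, mul_comm]
    _ ≤ (Finset.univ : Finset (Finset (Fin d))).card :=
      Finset.card_le_card_of_injOn L (fun _ _ => Finset.mem_univ _)
        (by rwa [Finset.coe_erase, Finset.coe_univ, ← compl_eq_univ_sdiff])
    _ = 2 ^ d := by simp

end complementOfMatching

/-- If `G` is the complement of a perfect matching on `n = 2k ≥ 2` vertices,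
then `si G ≥ log₂ (n - 1)`. -/
theorem logb_le_si_complementOfMatching (k : ℕ) (hk : 1 ≤ k) :
    Real.logb 2 ((2 * k : ℝ) - 1) ≤ (si (complementOfMatching k) : ℝ) := by
  obtain ⟨a, b, L, h⟩ := Nat.sInf_mem (exists_isSIRep (complementOfMatching k))
  have hbound : (2 * k : ℝ) - 1 ≤ 2 ^ si (complementOfMatching k) := by
    have := complementOfMatching.two_mul_sub_one_le_two_pow h
    rw [← Nat.cast_le (α := ℝ), Nat.cast_sub (by omega)] at this
    exact_mod_cast this
  have hpos : (0 : ℝ) < 2 * k - 1 := by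
    have : (1 : ℝ) ≤ k := by exact_mod_cast hk
    linarith
  rw [Real.logb_le_iff_le_rpow one_lt_two hpos, Real.rpow_natCast]
  exact hbound
end

section
/- Every graph G satisfies linear-mim(G) ≤ si(G), where linear-mim is the linear maximum induced matching width. -/
/-- The linear mim-width of a finite graph `G`: the least `w` such that for some
vertex ordering, every induced matching of `G` all of whose edges cross a fixed
cut of the ordering has size at most `w`. -/
noncomputable def linearMim {V : Type*} [Fintype V] (G : SimpleGraph V) : ℕ :=
  sInf {w | ∃ σ : Fin (Fintype.card V) ≃ V,
    ∀ (i : ℕ) (m : ℕ) (x y : Fin m → V),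
      (∀ j, G.Adj (x j) (y j)) →
      (∀ j, ((σ.symm (x j) : ℕ) < i ∧ i ≤ (σ.symm (y j) : ℕ))) →
      (∀ j l, j ≠ l → ¬ G.Adj (x j) (x l) ∧ ¬ G.Adj (x j) (y l) ∧
        ¬ G.Adj (y j) (y l) ∧ x j ≠ x l ∧ x j ≠ y l ∧ y j ≠ y l) →
      m ≤ w}

/-
Take a representation with `si G` labels and order the vertices by left endpoints. Each edge of
an induced matching across a cut carries a label common to both its ends, and two such edges
`xy`, `x'y'` never carry the same one: if their intervals meet at `p` and `q` with, say, `p ≤ q`,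
then `y` and `x'` share that label without being adjacent, so the interval of `y` ends before that
of `x'` begins, contradicting `a x' ≤ a y`.
-/

open Set

lemma Set.le_left_of_disjoint_Ioo {α : Type*} [LinearOrder α] [DenselyOrdered α]
    {a b a' b' p q : α} (h : Disjoint (Ioo a b) (Ioo a' b')) (hp : p ∈ Ioo a b)
    (hq : q ∈ Ioo a' b') (hpq : p ≤ q) : b ≤ a' := by
  obtain ⟨hap, hpb⟩ := hp
  obtain ⟨haq, hqb⟩ := hq
  rw [Ioo_disjoint_Ioo, min_le_iff, le_max_iff, le_max_iff] at h
  rcases h with (h | h) | (h | h) <;> order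

lemma Fintype.exists_equiv_fin_monotone_comp {V α : Type*} [Fintype V] [LinearOrder α]
    (f : V → α) : ∃ σ : Fin (Fintype.card V) ≃ V, Monotone (f ∘ σ) :=
  let e := Fintype.equivFin V
  ⟨(Tuple.sort (f ∘ e.symm)).trans e.symm, Tuple.monotone_sort (f ∘ e.symm)⟩

namespace IsSIRep

variable {V : Type*} {G : SimpleGraph V} {d : ℕ} {a b : V → ℝ} {L : V → Finset (Fin d)}

lemma exists_of_fintype [Fintype V] (G : SimpleGraph V) :
    ∃ a b L, IsSIRep G (Fintype.card (Sym2 V)) a b L := by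
  classical
  let e := Fintype.equivFin (Sym2 V)
  refine ⟨fun _ ↦ 0, fun _ ↦ 1, fun v ↦ {k | e.symm k ∈ G.incidenceSet v}, fun _ ↦ one_pos,
    fun u v huv ↦ ⟨fun h ↦ ⟨⟨1 / 2, by norm_num, by norm_num⟩, e s(u, v), ?_⟩, ?_⟩⟩
  · simp [G.mk'_mem_incidenceSet_left_iff.2 h, G.mk'_mem_incidenceSet_right_iff.2 h]
  · rintro ⟨-, k, hk⟩
    simp only [Finset.mem_inter, Finset.mem_filter_univ] at hk
    exact G.adj_of_mem_incidenceSet huv hk.1 hk.2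

lemma exists_label_of_adj (hG : IsSIRep G d a b L) {u v : V} (h : G.Adj u v) :
    (L u ∩ L v).Nonempty :=
  ((hG.2 u v h.ne).1 h).2

lemma exists_point_of_adj (hG : IsSIRep G d a b L) {u v : V} (h : G.Adj u v) :
    (Ioo (a u) (b u) ∩ Ioo (a v) (b v)).Nonempty :=
  ((hG.2 u v h.ne).1 h).1

lemma disjoint_of_not_adj (hG : IsSIRep G d a b L) {u v : V} (huv : u ≠ v)
    (h : ¬ G.Adj u v) {c : Fin d} (hu : c ∈ L u) (hv : c ∈ L v) :
    Disjoint (Ioo (a u) (b u)) (Ioo (a v) (b v)) :=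
  disjoint_iff_inter_eq_empty.2 <| not_nonempty_iff_eq_empty.1 fun hI ↦
    h <| (hG.2 u v huv).2 ⟨hI, c, Finset.mem_inter.2 ⟨hu, hv⟩⟩

lemma left_lt_left_of_not_adj (hG : IsSIRep G d a b L) {u v : V} (huv : u ≠ v)
    (h : ¬ G.Adj u v) {c : Fin d} (hu : c ∈ L u) (hv : c ∈ L v) {p q : ℝ}
    (hp : p ∈ Ioo (a u) (b u)) (hq : q ∈ Ioo (a v) (b v)) (hpq : p ≤ q) : a u < a v :=
  (hG.1 u).trans_le <| le_left_of_disjoint_Ioo (hG.disjoint_of_not_adj huv h hu hv) hp hq hpq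

lemma notMem_inter_of_crossing (hG : IsSIRep G d a b L) {x y x' y' : V} (hxy : G.Adj x y)
    (hxy' : G.Adj x' y') (hxy'_ne : x ≠ y') (hxy'_nadj : ¬ G.Adj x y') (hyx'_ne : y ≠ x')
    (hyx'_nadj : ¬ G.Adj y x') (hx'y : a x' ≤ a y) (hxy'_le : a x ≤ a y') {c : Fin d}
    (hc : c ∈ L x ∩ L y) : c ∉ L x' ∩ L y' := by
  intro hc'
  obtain ⟨hcx, hcy⟩ := Finset.mem_inter.1 hc
  obtain ⟨hcx', hcy'⟩ := Finset.mem_inter.1 hc'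
  obtain ⟨p, hpx, hpy⟩ := hG.exists_point_of_adj hxy
  obtain ⟨q, hqx', hqy'⟩ := hG.exists_point_of_adj hxy'
  rcases le_total p q with hpq | hqp
  · exact (hG.left_lt_left_of_not_adj hyx'_ne hyx'_nadj hcy hcx' hpy hqx' hpq).not_ge hx'y
  · exact (hG.left_lt_left_of_not_adj hxy'_ne.symm (fun h ↦ hxy'_nadj h.symm) hcy' hcx hqy'
      hpx hqp).not_ge hxy'_le

lemma card_le_of_crossing_inducedMatching (hG : IsSIRep G d a b L) {n : ℕ} {σ : Fin n ≃ V}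
    (hσ : Monotone (a ∘ σ)) {i m : ℕ} {x y : Fin m → V} (hadj : ∀ j, G.Adj (x j) (y j))
    (hcut : ∀ j, (σ.symm (x j) : ℕ) < i ∧ i ≤ (σ.symm (y j) : ℕ))
    (hind : ∀ j l, j ≠ l → ¬ G.Adj (x j) (x l) ∧ ¬ G.Adj (x j) (y l) ∧
      ¬ G.Adj (y j) (y l) ∧ x j ≠ x l ∧ x j ≠ y l ∧ y j ≠ y l) : m ≤ d := by
  have hle : ∀ j l, a (x l) ≤ a (y j) := fun j l ↦ by
    simpa using hσ (Fin.le_def.2 ((hcut l).1.le.trans (hcut j).2))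
  choose c hc using fun j ↦ hG.exists_label_of_adj (hadj j)
  have hc_inj : Function.Injective c := by
    intro j l hjl
    by_contra hne
    obtain ⟨-, hjl_nadj, -, -, hjl_ne, -⟩ := hind j l hne
    obtain ⟨-, hlj_nadj, -, -, hlj_ne, -⟩ := hind l j (Ne.symm hne)
    exact hG.notMem_inter_of_crossing (hadj j) (hadj l) hjl_ne hjl_nadj hlj_ne.symm
      (fun h ↦ hlj_nadj h.symm) (hle j l) (hle l j) (hc j) (hjl ▸ hc l)
  simpa using Fintype.card_le_of_injective c hc_inj

end IsSIRep

/-- Every graph satisfies `linear-mim(G) ≤ si(G)`. -/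
theorem linearMim_le_si {V : Type*} [Fintype V] (G : SimpleGraph V) :
    linearMim G ≤ si G := by
  obtain ⟨a, b, L, hG⟩ : ∃ a b L, IsSIRep G (si G) a b L :=
    Nat.sInf_mem (s := {d | ∃ a b L, IsSIRep G d a b L})
      ⟨_, IsSIRep.exists_of_fintype G⟩
  obtain ⟨σ, hσ⟩ := Fintype.exists_equiv_fin_monotone_comp a
  exact Nat.sInf_le ⟨σ, fun _ _ _ _ hadj hcut hind ↦
    hG.card_le_of_crossing_inducedMatching hσ hadj hcut hind⟩
end

section
/- For every graph G, the path-independence number path-α(G) equals the minimum integer k ≥ 0 such that G is the intersection of an interval graph and a graph with independence number at most k. -/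
/-- A path decomposition of `G` with bags `X 0, …, X (p-1)`. -/
def IsPathDecomp {V : Type*} (G : SimpleGraph V) (p : ℕ) (X : Fin p → Finset V) : Prop :=
  (∀ v, ∃ i, v ∈ X i) ∧
  (∀ u v, G.Adj u v → ∃ i, u ∈ X i ∧ v ∈ X i) ∧
  (∀ v, ∀ i j l : Fin p, i ≤ j → j ≤ l → v ∈ X i → v ∈ X l → v ∈ X j)

/-- `S` is an independent set in `G`. -/
def IsIndepSet {V : Type*} (G : SimpleGraph V) (S : Finset V) : Prop :=
  ∀ u ∈ S, ∀ v ∈ S, u ≠ v → ¬ G.Adj u v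

/-- The path-independence number of `G`. -/
noncomputable def pathAlpha {V : Type*} (G : SimpleGraph V) : ℕ :=
  sInf {k | ∃ (p : ℕ) (X : Fin p → Finset V), IsPathDecomp G p X ∧
    ∀ (i : Fin p) (S : Finset V), S ⊆ X i → IsIndepSet G S → S.card ≤ k}

/-- `F` is an interval graph. -/
def IsIntervalGraph {V : Type*} (F : SimpleGraph V) : Prop :=
  ∃ a b : V → ℝ, (∀ v, a v < b v) ∧
    ∀ u v : V, u ≠ v →
      (F.Adj u v ↔ (Set.Ioo (a u) (b u) ∩ Set.Ioo (a v) (b v)).Nonempty)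

/-- The path-independence number of `G` equals the least `k ≥ 0` such that `G`
is the intersection of an interval graph and a graph with independence number
at most `k`. -/
theorem pathAlpha_eq_min_intersection {V : Type*} [Fintype V] (G : SimpleGraph V) :
    pathAlpha G = sInf {k | ∃ F H : SimpleGraph V, IsIntervalGraph F ∧
      (∀ S : Finset V, IsIndepSet H S → S.card ≤ k) ∧ G = F ⊓ H} := by
  classical
  unfold pathAlpha
  congr 1
  ext k
  simp only [Set.mem_setOf_eq]
  constructor
  · rintro ⟨p, X, ⟨hcov, hedge, hconn⟩, hbound⟩
    set I : V → Finset (Fin p) := fun v => Finset.univ.filter (fun i => v ∈ X i) with hI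
    have hne : ∀ v, (I v).Nonempty := by
      intro v
      obtain ⟨i, hi⟩ := hcov v
      exact ⟨i, by simp [hI, hi]⟩
    set fst : V → Fin p := fun v => (I v).min' (hne v) with hfst
    set lst : V → Fin p := fun v => (I v).max' (hne v) with hlst
    set a : V → ℝ := fun v => ((fst v : ℕ) : ℝ) with ha
    set b : V → ℝ := fun v => ((lst v : ℕ) : ℝ) + 1 with hb
    have hmemX : ∀ v (i : Fin p), i ∈ I v ↔ v ∈ X i := by
      intro v i; simp [hI]
    have hfl : ∀ v, (fst v : ℕ) ≤ (lst v : ℕ) :=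
      fun v => (I v).min'_le _ ((I v).max'_mem (hne v))
    have hab : ∀ v, a v < b v := by
      intro v
      have := (Nat.cast_le (α := ℝ)).2 (hfl v)
      simp only [ha, hb]
      linarith
    -- lemma A : shared bag implies interval intersection
    have lemA : ∀ u v : V, (∃ i, u ∈ X i ∧ v ∈ X i) →
        (Set.Ioo (a u) (b u) ∩ Set.Ioo (a v) (b v)).Nonempty := by
      rintro u v ⟨i, hu, hv⟩
      have h1 := (Nat.cast_le (α := ℝ)).2 ((I u).min'_le _ ((hmemX u i).2 hu))
      have h2 := (Nat.cast_le (α := ℝ)).2 ((I u).le_max' _ ((hmemX u i).2 hu))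
      have h3 := (Nat.cast_le (α := ℝ)).2 ((I v).min'_le _ ((hmemX v i).2 hv))
      have h4 := (Nat.cast_le (α := ℝ)).2 ((I v).le_max' _ ((hmemX v i).2 hv))
      exact ⟨(i : ℕ) + 1/2, ⟨by simp only [ha]; linarith, by simp only [hb]; linarith⟩,
        ⟨by simp only [ha]; linarith, by simp only [hb]; linarith⟩⟩
    -- lemma B : interval intersection implies fst u ≤ lst v
    have lemB : ∀ u v : V, (Set.Ioo (a u) (b u) ∩ Set.Ioo (a v) (b v)).Nonempty →
        (fst u : ℕ) ≤ (lst v : ℕ) := by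
      rintro u v ⟨t, ⟨hu1, _⟩, ⟨_, hv2⟩⟩
      simp only [ha, hb] at hu1 hv2
      have h2 : ((fst u : ℕ) : ℝ) < (((lst v : ℕ) + 1 : ℕ) : ℝ) := by push_cast; linarith
      exact Nat.lt_succ_iff.mp (Nat.cast_lt.mp h2)
    -- lemma C : interpolation membership
    have lemC : ∀ (v : V) (i : Fin p), fst v ≤ i → i ≤ lst v → v ∈ X i := by
      intro v i h1 h2
      exact hconn v (fst v) i (lst v) h1 h2
        ((hmemX v _).1 ((I v).min'_mem (hne v))) ((hmemX v _).1 ((I v).max'_mem (hne v)))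
    set F : SimpleGraph V :=
      { Adj := fun u v => u ≠ v ∧ (Set.Ioo (a u) (b u) ∩ Set.Ioo (a v) (b v)).Nonempty
        symm := by
          refine ⟨?_⟩; rintro u v ⟨h1, h2⟩
          exact ⟨h1.symm, by rwa [Set.inter_comm]⟩
        loopless := ⟨fun v h => h.1 rfl⟩ } with hF
    set H : SimpleGraph V :=
      { Adj := fun u v => u ≠ v ∧
          (G.Adj u v ∨ ¬ (Set.Ioo (a u) (b u) ∩ Set.Ioo (a v) (b v)).Nonempty)
        symm := by
          refine ⟨?_⟩; rintro u v ⟨h1, h2⟩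
          refine ⟨h1.symm, ?_⟩
          rcases h2 with h2 | h2
          · exact Or.inl h2.symm
          · exact Or.inr (by rwa [Set.inter_comm])
        loopless := ⟨fun v h => h.1 rfl⟩ } with hH
    refine ⟨F, H, ⟨a, b, hab, fun u v huv => by simp [hF, huv]⟩, ?_, ?_⟩
    · -- independence number of H is at most k
      intro S hS
      rcases S.eq_empty_or_nonempty with rfl | hSne
      · simp
      have key : ∀ u ∈ S, ∀ v ∈ S, u ≠ v →
          ¬ G.Adj u v ∧ (Set.Ioo (a u) (b u) ∩ Set.Ioo (a v) (b v)).Nonempty := by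
        intro u hu v hv huv
        have := hS u hu v hv huv
        simp only [hH] at this
        by_contra hcon
        push_neg at hcon
        by_cases hg : G.Adj u v
        · exact this ⟨huv, Or.inl hg⟩
        · exact this ⟨huv, Or.inr (by rw [Set.not_nonempty_iff_eq_empty]; exact hcon hg)⟩
      obtain ⟨m, hm, hmax⟩ := S.exists_max_image fst hSne
      have hsub : S ⊆ X (fst m) := by
        intro v hv
        rcases eq_or_ne v m with rfl | hvm
        · exact (hmemX v _).1 ((I v).min'_mem (hne v))
        · have h1 : fst v ≤ fst m := hmax v hv
          have h2 : (fst m : ℕ) ≤ (lst v : ℕ) := lemB m v (key m hm v hv hvm.symm).2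
          exact lemC v (fst m) h1 h2
      exact hbound (fst m) S hsub (fun u hu v hv huv => (key u hu v hv huv).1)
    · -- G = F ⊓ H
      ext u v
      simp only [SimpleGraph.inf_adj, hF, hH]
      constructor
      · intro h
        exact ⟨⟨h.ne, lemA u v (hedge u v h)⟩, h.ne, Or.inl h⟩
      · rintro ⟨⟨hne', hint⟩, -, hor | hor⟩
        · exact hor
        · exact absurd hint hor
  · rintro ⟨F, H, ⟨a, b, hab, hFiff⟩, hH, hG⟩
    set p := Fintype.card V with hp
    set e0 : Fin p ≃ V := (Fintype.equivFin V).symm with he0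
    set σ := Tuple.sort (a ∘ e0) with hσ
    set e : Fin p ≃ V := (σ : Equiv.Perm (Fin p)).trans e0 with he
    have hmono : Monotone (fun i => a (e i)) := Tuple.monotone_sort (a ∘ e0)
    set X : Fin p → Finset V :=
      fun i => Finset.univ.filter (fun u => a u ≤ a (e i) ∧ a (e i) < b u) with hX
    have hmem : ∀ (u : V) (i : Fin p), u ∈ X i ↔ a u ≤ a (e i) ∧ a (e i) < b u := by
      intro u i; simp [hX]
    refine ⟨p, X, ⟨?_, ?_, ?_⟩, ?_⟩
    · intro v
      exact ⟨e.symm v, (hmem v _).2 (by simp [hab v])⟩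
    · intro u v h
      have hFadj : F.Adj u v := by rw [hG] at h; exact h.1
      obtain ⟨t, ⟨hu1, hu2⟩, hv1, hv2⟩ := (hFiff u v h.ne).1 hFadj
      rcases le_total (a u) (a v) with hle | hle
      · exact ⟨e.symm v, (hmem u _).2 (by simp; exact ⟨hle, lt_trans hv1 hu2⟩),
          (hmem v _).2 (by simp [hab v])⟩
      · exact ⟨e.symm u, (hmem u _).2 (by simp [hab u]),
          (hmem v _).2 (by simp; exact ⟨hle, lt_trans hu1 hv2⟩)⟩
    · intro v i j l hij hjl hi hl
      rw [hmem] at hi hl ⊢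
      exact ⟨le_trans hi.1 (hmono hij), lt_of_le_of_lt (hmono hjl) hl.2⟩
    · intro i S hsub hind
      refine hH S ?_
      intro u hu v hv huv hHadj
      have hu' := (hmem u i).1 (hsub hu)
      have hv' := (hmem v i).1 (hsub hv)
      have hFadj : F.Adj u v := by
        rw [hFiff u v huv]
        set t := a (e i) with ht
        refine ⟨(t + min (b u) (b v)) / 2, ⟨?_, ?_⟩, ?_, ?_⟩
        · have : t < min (b u) (b v) := lt_min hu'.2 hv'.2
          have := hu'.1; linarith
        · have h1 : t < min (b u) (b v) := lt_min hu'.2 hv'.2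
          have h2 : min (b u) (b v) ≤ b u := min_le_left _ _
          linarith
        · have : t < min (b u) (b v) := lt_min hu'.2 hv'.2
          have := hv'.1; linarith
        · have h1 : t < min (b u) (b v) := lt_min hu'.2 hv'.2
          have h2 : min (b u) (b v) ≤ b v := min_le_right _ _
          linarith
      exact hind u hu v hv huv (hG ▸ (SimpleGraph.inf_adj ..).2 ⟨hFadj, hHadj⟩ : G.Adj u v)
end

section
/- Every graph G satisfies si(G) ≤ pw(G)² + pw(G), where pw is pathwidth. -/
/-- The pathwidth of `G`. -/
noncomputable def pathwidth {V : Type*} (G : SimpleGraph V) : ℕ :=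
  sInf {w | ∃ (p : ℕ) (X : Fin p → Finset V), IsPathDecomp G p X ∧
    ∀ i, (X i).card ≤ w + 1}

/-!
Fix a path decomposition of width `w` and give each vertex `v` the interval of indices of the
bags containing it. Taking vertices in order of their first bag, every vertex meets at most `w`
earlier ones (they all lie in its first bag), so greedily the intervals get colours in
`Fin (w + 1)` with meeting intervals coloured differently. For a colour `β`, a vertex `v` has at
most one earlier vertex of colour `β` meeting it, its `β`-parent; this makes it possible to give
each `v` a bit `side v β` that agrees with the bit of its `β`-parent `u` at colour `c v` exactly
when `uv` is an edge. The label `({c v, β}, side v β)` for every colour `β ≠ c v` then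
distinguishes edges from non-edges among meeting intervals, with `2 * (w + 1).choose 2 = w² + w`
labels in all.
-/

open Finset

section

variable {V : Type*}

/-- `IsSIRep` with labels in an arbitrary type. -/
def IsSIRepWith {α : Type*} [DecidableEq α] (G : SimpleGraph V) (a b : V → ℝ)
    (L : V → Finset α) : Prop :=
  (∀ v, a v < b v) ∧
  ∀ u v : V, u ≠ v →
    (G.Adj u v ↔ (Set.Ioo (a u) (b u) ∩ Set.Ioo (a v) (b v)).Nonempty ∧ (L u ∩ L v).Nonempty)

theorem IsSIRepWith.si_le_card {α : Type*} [Fintype α] [DecidableEq α] {G : SimpleGraph V}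
    {a b : V → ℝ} {L : V → Finset α} (h : IsSIRepWith G a b L) : si G ≤ Fintype.card α := by
  let e := (Fintype.equivFin α).toEmbedding
  refine Nat.sInf_le ⟨a, b, fun v => (L v).map e, h.1, fun u v huv => ?_⟩
  rw [← map_inter, map_nonempty]
  exact h.2 u v huv

theorem card_nonDiag_sym2_prod_bool (n : ℕ) :
    Fintype.card ({z : Sym2 (Fin (n + 1)) // ¬z.IsDiag} × Bool) = n ^ 2 + n := by
  rw [Fintype.card_prod, Sym2.card_subtype_not_diag, Fintype.card_fin, Fintype.card_bool,
    Nat.choose_two_right, Nat.add_sub_cancel, mul_comm (n + 1),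
    Nat.div_mul_cancel (Nat.even_mul_succ_self n).two_dvd]
  ring

theorem SimpleGraph.exists_isPathDecomp_card_le_pathwidth [Fintype V] (G : SimpleGraph V) :
    ∃ (p : ℕ) (X : Fin p → Finset V), IsPathDecomp G p X ∧ ∀ i, #(X i) ≤ pathwidth G + 1 := by
  have hone_bag : {w | ∃ (p : ℕ) (X : Fin p → Finset V), IsPathDecomp G p X ∧
      ∀ i, #(X i) ≤ w + 1}.Nonempty :=
    ⟨Fintype.card V, 1, fun _ => univ,
      ⟨fun v => ⟨0, mem_univ v⟩, fun u v _ => ⟨0, mem_univ u, mem_univ v⟩,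
        fun v _ _ _ _ _ _ _ => mem_univ v⟩,
      fun _ => (card_le_univ _).trans (Nat.le_succ _)⟩
  exact Nat.sInf_mem hone_bag

def SharesBag {p : ℕ} (X : Fin p → Finset V) (u v : V) : Prop := ∃ i, u ∈ X i ∧ v ∈ X i

theorem SharesBag.symm {p : ℕ} {X : Fin p → Finset V} {u v : V} (h : SharesBag X u v) :
    SharesBag X v u :=
  let ⟨i, hu, hv⟩ := h; ⟨i, hv, hu⟩

def IsBagColoring {p : ℕ} {κ : Type*} (X : Fin p → Finset V) (c : V → κ) : Prop :=
  ∀ u v, u ≠ v → SharesBag X u v → c u ≠ c v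

namespace IsPathDecomp

variable {G : SimpleGraph V} {p : ℕ} {X : Fin p → Finset V} (hd : IsPathDecomp G p X)
  {u v : V} {i : Fin p}

noncomputable def first (v : V) : Fin p := wellFounded_lt.min {i | v ∈ X i} (hd.1 v)

noncomputable def last (v : V) : Fin p := wellFounded_gt.min {i | v ∈ X i} (hd.1 v)

theorem mem_first (v : V) : v ∈ X (hd.first v) := wellFounded_lt.min_mem {i | v ∈ X i} (hd.1 v)

theorem mem_last (v : V) : v ∈ X (hd.last v) := wellFounded_gt.min_mem {i | v ∈ X i} (hd.1 v)

theorem first_le (h : v ∈ X i) : hd.first v ≤ i :=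
  not_lt.1 (wellFounded_lt.not_lt_min {i | v ∈ X i} h)

theorem le_last (h : v ∈ X i) : i ≤ hd.last v :=
  not_lt.1 (wellFounded_gt.not_lt_min {i | v ∈ X i} h)

theorem first_le_last (v : V) : hd.first v ≤ hd.last v := hd.first_le (hd.mem_last v)

theorem mem_iff : v ∈ X i ↔ hd.first v ≤ i ∧ i ≤ hd.last v :=
  ⟨fun h => ⟨hd.first_le h, hd.le_last h⟩,
    fun h => hd.2.2 v _ i _ h.1 h.2 (hd.mem_first v) (hd.mem_last v)⟩

theorem sharesBag_iff : SharesBag X u v ↔ hd.first u ≤ hd.last v ∧ hd.first v ≤ hd.last u := by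
  constructor
  · rintro ⟨i, hu, hv⟩
    exact ⟨(hd.first_le hu).trans (hd.le_last hv), (hd.first_le hv).trans (hd.le_last hu)⟩
  · rintro ⟨huv, hvu⟩
    refine ⟨max (hd.first u) (hd.first v), hd.mem_iff.2 ⟨le_max_left _ _, ?_⟩,
      hd.mem_iff.2 ⟨le_max_right _ _, ?_⟩⟩
    · exact max_le (hd.first_le_last u) hvu
    · exact max_le huv (hd.first_le_last v)

theorem Ioo_inter_Ioo_nonempty_iff (u v : V) :
    (Set.Ioo ((hd.first u : ℕ) : ℝ) ((hd.last u : ℕ) + 1) ∩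
      Set.Ioo ((hd.first v : ℕ) : ℝ) ((hd.last v : ℕ) + 1)).Nonempty ↔ SharesBag X u v := by
  have cast_lt_iff (m n : ℕ) : (m : ℝ) < n + 1 ↔ m ≤ n := by
    exact_mod_cast Nat.lt_succ_iff
  simp only [Set.Ioo_inter_Ioo, Set.nonempty_Ioo, max_lt_iff, lt_min_iff, cast_lt_iff,
    ← Fin.le_iff_val_le_val, hd.first_le_last, true_and, and_true]
  rw [hd.sharesBag_iff, and_comm]

variable [Fintype V]

noncomputable def key (v : V) : Lex (Fin p × Fin (Fintype.card V)) :=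
  toLex (hd.first v, Fintype.equivFin V v)

theorem key_lt_or_gt (h : u ≠ v) : hd.key u < hd.key v ∨ hd.key v < hd.key u := by
  refine lt_or_gt_of_ne fun e => h ((Fintype.equivFin V).injective ?_)
  exact (Prod.ext_iff.1 (toLex.injective e)).2

theorem mem_first_of_key_lt (h : SharesBag X u v) (hlt : hd.key u < hd.key v) :
    u ∈ X (hd.first v) := by
  have hfirst : hd.first u ≤ hd.first v := by
    rcases Prod.Lex.toLex_lt_toLex.1 hlt with hlt | ⟨heq, -⟩
    exacts [hlt.le, heq.le]
  exact hd.mem_iff.2 ⟨hfirst, ((hd.sharesBag_iff).1 h).2⟩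

noncomputable def greedyColor : V → ℕ :=
  (InvImage.wf hd.key wellFounded_lt).fix fun v color =>
    sInf {n | ∀ u (h : hd.key u < hd.key v), SharesBag X u v → color u h ≠ n}

theorem greedyColor_eq (v : V) :
    hd.greedyColor v =
      sInf {n | ∀ u, hd.key u < hd.key v → SharesBag X u v → hd.greedyColor u ≠ n} :=
  WellFounded.fix_eq _ _ _

theorem greedyColor_spec {w : ℕ} (hX : ∀ i, #(X i) ≤ w + 1) (v : V) :
    hd.greedyColor v < w + 1 ∧
      ∀ u, hd.key u < hd.key v → SharesBag X u v → hd.greedyColor u ≠ hd.greedyColor v := by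
  classical
  set free := {n | ∀ u, hd.key u < hd.key v → SharesBag X u v → hd.greedyColor u ≠ n}
  -- the colours of earlier vertices meeting `v` are among those of the rest of its first bag
  have hcard : #(((X (hd.first v)).erase v).image hd.greedyColor) < #(range (w + 1)) := by
    rw [card_range]
    calc #(((X (hd.first v)).erase v).image hd.greedyColor)
        ≤ #((X (hd.first v)).erase v) := card_image_le
      _ < w + 1 := by
        rw [card_erase_of_mem (hd.mem_first v)]
        have := hX (hd.first v)
        have := card_pos.2 ⟨v, hd.mem_first v⟩
        omega
  obtain ⟨n, hn, hfree⟩ := exists_mem_notMem_of_card_lt_card hcard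
  have hn_free : n ∈ free := fun u hlt h e =>
    hfree <| mem_image.2
      ⟨u, mem_erase.2 ⟨fun huv => (huv ▸ hlt).false, hd.mem_first_of_key_lt h hlt⟩, e⟩
  rw [hd.greedyColor_eq v]
  exact ⟨(Nat.sInf_le hn_free).trans_lt (mem_range.1 hn), Nat.sInf_mem ⟨n, hn_free⟩⟩

theorem exists_isBagColoring (hd : IsPathDecomp G p X) {w : ℕ} (hX : ∀ i, #(X i) ≤ w + 1) :
    ∃ c : V → Fin (w + 1), IsBagColoring X c := by
  refine ⟨fun v => ⟨hd.greedyColor v, (hd.greedyColor_spec hX v).1⟩, fun u v huv h => ?_⟩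
  rw [Ne, Fin.mk.injEq]
  rcases hd.key_lt_or_gt huv with hlt | hlt
  · exact (hd.greedyColor_spec hX v).2 u hlt h
  · exact fun e => (hd.greedyColor_spec hX u).2 v hlt h.symm e.symm

variable {κ : Type*} {c : V → κ}

open Classical in
/-- `h.choose` is the `β`-parent of `v`, unique by `side_of_parent`. -/
noncomputable def side (c : V → κ) : V → κ → Bool :=
  (InvImage.wf hd.key wellFounded_lt).fix fun v side β =>
    if h : ∃ u, c u = β ∧ SharesBag X u v ∧ hd.key u < hd.key v then
      if G.Adj h.choose v then side h.choose h.choose_spec.2.2 (c v)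
      else !side h.choose h.choose_spec.2.2 (c v)
    else false

open Classical in
theorem side_of_parent (hc : IsBagColoring X c) (h : SharesBag X u v)
    (hlt : hd.key u < hd.key v) :
    hd.side c v (c u) = if G.Adj u v then hd.side c u (c v) else !hd.side c u (c v) := by
  have hex : ∃ u', c u' = c u ∧ SharesBag X u' v ∧ hd.key u' < hd.key v := ⟨u, rfl, h, hlt⟩
  -- two earlier vertices sharing a bag with `v` both lie in its first bag
  have hparent : hex.choose = u := by
    obtain ⟨hcolor, h', hlt'⟩ := hex.choose_spec
    by_contra hne
    exact hc _ _ hne ⟨hd.first v, hd.mem_first_of_key_lt h' hlt', hd.mem_first_of_key_lt h hlt⟩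
      hcolor
  unfold side
  rw [WellFounded.fix_eq]
  simp only [dif_pos hex, hparent]

theorem side_eq_side_iff_adj (hc : IsBagColoring X c) (huv : u ≠ v) (h : SharesBag X u v) :
    hd.side c u (c v) = hd.side c v (c u) ↔ G.Adj u v := by
  wlog hlt : hd.key u < hd.key v generalizing u v
  · have hvu := this huv.symm h.symm ((hd.key_lt_or_gt huv).resolve_left hlt)
    rwa [eq_comm, G.adj_comm] at hvu
  rw [hd.side_of_parent hc h hlt]
  by_cases hadj : G.Adj u v <;> simp [hadj]

variable [Fintype κ] [DecidableEq κ]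

open Classical in
noncomputable def labels (c : V → κ) (v : V) : Finset ({z : Sym2 κ // ¬z.IsDiag} × Bool) :=
  univ.filter fun ℓ => ∃ β, ℓ.1.1 = s(c v, β) ∧ ℓ.2 = hd.side c v β

theorem mem_labels {ℓ : {z : Sym2 κ // ¬z.IsDiag} × Bool} :
    ℓ ∈ hd.labels c v ↔ ∃ β, ℓ.1.1 = s(c v, β) ∧ ℓ.2 = hd.side c v β := by
  simp [labels]

theorem labels_inter_nonempty_iff (hc : IsBagColoring X c) (huv : u ≠ v)
    (h : SharesBag X u v) : (hd.labels c u ∩ hd.labels c v).Nonempty ↔ G.Adj u v := by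
  rw [← hd.side_eq_side_iff_adj hc huv h]
  constructor
  · rintro ⟨ℓ, hℓ⟩
    obtain ⟨⟨β, hβ, hside_u⟩, ⟨γ, hγ, hside_v⟩⟩ := And.imp hd.mem_labels.1 hd.mem_labels.1
      (mem_inter.1 hℓ)
    rcases Sym2.eq_iff.1 (hβ.symm.trans hγ) with ⟨hcolor, -⟩ | ⟨hγ, hβ⟩
    · exact absurd hcolor (hc u v huv h)
    · subst hβ hγ
      exact hside_u.symm.trans hside_v
  · intro hside
    have hdiag : ¬s(c u, c v).IsDiag := Sym2.mk_isDiag_iff.not.2 (hc u v huv h)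
    exact ⟨(⟨s(c u, c v), hdiag⟩, hd.side c u (c v)), mem_inter.2
      ⟨hd.mem_labels.2 ⟨c v, rfl, rfl⟩, hd.mem_labels.2 ⟨c u, Sym2.eq_swap, hside⟩⟩⟩

theorem isSIRepWith (hc : IsBagColoring X c) :
    IsSIRepWith G (fun v => ((hd.first v : ℕ) : ℝ)) (fun v => ((hd.last v : ℕ) : ℝ) + 1)
      (hd.labels c) := by
  refine ⟨fun v => ?_, fun u v huv => ?_⟩
  · have : ((hd.first v : ℕ) : ℝ) ≤ (hd.last v : ℕ) := by exact_mod_cast hd.first_le_last v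
    linarith
  · rw [hd.Ioo_inter_Ioo_nonempty_iff]
    constructor
    · intro hadj
      have h := hd.2.1 u v hadj
      exact ⟨h, (hd.labels_inter_nonempty_iff hc huv h).2 hadj⟩
    · rintro ⟨h, hlabels⟩
      exact (hd.labels_inter_nonempty_iff hc huv h).1 hlabels

end IsPathDecomp

end

/-- Every graph satisfies `si(G) ≤ pw(G)² + pw(G)`. -/
theorem si_le_pathwidth_sq_add_pathwidth {V : Type*} [Fintype V]
    (G : SimpleGraph V) :
    si G ≤ pathwidth G ^ 2 + pathwidth G := by
  obtain ⟨p, X, hd, hX⟩ := G.exists_isPathDecomp_card_le_pathwidth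
  obtain ⟨c, hc⟩ := hd.exists_isBagColoring hX
  calc si G ≤ Fintype.card ({z : Sym2 (Fin (pathwidth G + 1)) // ¬z.IsDiag} × Bool) :=
        (hd.isSIRepWith hc).si_le_card
    _ = pathwidth G ^ 2 + pathwidth G := card_nonDiag_sym2_prod_bool _
end

section
/- A graph G admits a d-simultaneous interval representation if and only if G is the intersection of an interval graph and a graph with edge clique cover number at most d. -/
/-- The edge clique cover number of `H`: the least number of cliques of `H`
covering all edges of `H`. -/
noncomputable def eccNumber {V : Type*} (H : SimpleGraph V) : ℕ :=
  sInf {d | ∃ C : Fin d → Finset V, (∀ i, H.IsClique (C i : Set V)) ∧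
    ∀ u v, H.Adj u v → ∃ i, u ∈ C i ∧ v ∈ C i}

/-! The two conditions on a pair `(u, v)` in a simultaneous interval representation split the graph as
the intersection of the overlap graph of the intervals and the graph of shared labels. The latter is
covered by the `d` cliques `{v | i ∈ L v}`; conversely, the members of an edge clique cover of
size at most `d` (padded with empty cliques; finiteness of `V` makes the infimum defining
`eccNumber` attained) are turned back into labels, and the graph of shared labels recovers `H`. -/

open Finset

section

variable {V : Type*}

@[simps]
def intervalGraph (a b : V → ℝ) : SimpleGraph V where
  Adj u v := u ≠ v ∧ (Set.Ioo (a u) (b u) ∩ Set.Ioo (a v) (b v)).Nonempty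
  symm := ⟨fun _ _ h => ⟨h.1.symm, by rw [Set.inter_comm]; exact h.2⟩⟩

@[simps]
def labelGraph {ι : Type*} [DecidableEq ι] (L : V → Finset ι) : SimpleGraph V where
  Adj u v := u ≠ v ∧ (L u ∩ L v).Nonempty
  symm := ⟨fun _ _ h => ⟨h.1.symm, by rw [Finset.inter_comm]; exact h.2⟩⟩

def IsEdgeCliqueCover (H : SimpleGraph V) {ι : Type*} (C : ι → Finset V) : Prop :=
  (∀ i, H.IsClique (C i : Set V)) ∧ ∀ u v, H.Adj u v → ∃ i, u ∈ C i ∧ v ∈ C i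

lemma isIntervalGraph_iff {F : SimpleGraph V} :
    IsIntervalGraph F ↔ ∃ a b : V → ℝ, (∀ v, a v < b v) ∧ F = intervalGraph a b := by
  refine exists₂_congr fun a b => and_congr_right fun _ => ?_
  simp only [SimpleGraph.ext_iff, funext_iff, eq_iff_iff]
  refine forall₂_congr fun u v => ?_
  by_cases huv : u = v <;> simp [huv]

lemma isSIRep_iff {G : SimpleGraph V} {d : ℕ} {a b : V → ℝ} {L : V → Finset (Fin d)} :
    IsSIRep G d a b L ↔
      (∀ v, a v < b v) ∧ G = intervalGraph a b ⊓ labelGraph L := by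
  refine and_congr_right fun _ => ?_
  simp only [SimpleGraph.ext_iff, funext_iff, eq_iff_iff]
  refine forall₂_congr fun u v => ?_
  by_cases huv : u = v <;> simp [huv]

lemma eccNumber_le_of_isEdgeCliqueCover {H : SimpleGraph V} {d : ℕ} {C : Fin d → Finset V}
    (hC : IsEdgeCliqueCover H C) : eccNumber H ≤ d :=
  Nat.sInf_le ⟨C, hC⟩

lemma isEdgeCliqueCover_labelGraph [Fintype V] {ι : Type*} [DecidableEq ι] (L : V → Finset ι) :
    IsEdgeCliqueCover (labelGraph L) fun i => {v | i ∈ L v} := by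
  refine ⟨fun i u hu v hv huv => ⟨huv, i, ?_⟩, fun u v ⟨_, i, hi⟩ => ⟨i, ?_⟩⟩
  all_goals simp_all

lemma eccNumber_labelGraph_le [Fintype V] {d : ℕ} (L : V → Finset (Fin d)) :
    eccNumber (labelGraph L) ≤ d :=
  eccNumber_le_of_isEdgeCliqueCover (isEdgeCliqueCover_labelGraph L)

lemma exists_isEdgeCliqueCover [Fintype V] (H : SimpleGraph V) :
    ∃ k, ∃ C : Fin k → Finset V, IsEdgeCliqueCover H C := by
  classical
  let cliques : Finset (Finset V) := {s | H.IsClique (s : Set V)}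
  let e := cliques.equivFin
  refine ⟨cliques.card, fun i => e.symm i, fun i => (mem_filter.1 (e.symm i).2).2,
    fun u v huv => ⟨e ⟨{u, v}, ?_⟩, ?_⟩⟩
  · simpa [cliques, SimpleGraph.isClique_pair] using fun _ => huv
  · simp

lemma IsEdgeCliqueCover.extend_empty {H : SimpleGraph V} {k d : ℕ} {C : Fin k → Finset V}
    (hC : IsEdgeCliqueCover H C) (hkd : k ≤ d) :
    IsEdgeCliqueCover H fun i : Fin d => if h : (i : ℕ) < k then C ⟨i, h⟩ else ∅ := by
  refine ⟨fun i => ?_, fun u v huv => ?_⟩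
  · dsimp only
    split_ifs
    · exact hC.1 _
    · simp
  · obtain ⟨i, hu, hv⟩ := hC.2 u v huv
    exact ⟨Fin.castLE hkd i, by simpa using hu, by simpa using hv⟩

lemma exists_isEdgeCliqueCover_of_eccNumber_le [Fintype V] {H : SimpleGraph V} {d : ℕ}
    (hd : eccNumber H ≤ d) : ∃ C : Fin d → Finset V, IsEdgeCliqueCover H C := by
  obtain ⟨C, hC⟩ : ∃ C : Fin (eccNumber H) → Finset V, IsEdgeCliqueCover H C :=
    Nat.sInf_mem (exists_isEdgeCliqueCover H)
  exact ⟨_, hC.extend_empty hd⟩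

lemma IsEdgeCliqueCover.labelGraph_eq [DecidableEq V] {H : SimpleGraph V} {ι : Type*} [Fintype ι]
    [DecidableEq ι] {C : ι → Finset V} (hC : IsEdgeCliqueCover H C) :
    labelGraph (fun v => {i | v ∈ C i}) = H := by
  ext u v
  refine ⟨fun ⟨huv, i, hi⟩ => ?_, fun huv => ⟨huv.ne, ?_⟩⟩
  · simp only [mem_inter, mem_filter, mem_univ, true_and] at hi
    exact hC.1 i hi.1 hi.2 huv
  · obtain ⟨i, hu, hv⟩ := hC.2 u v huv
    exact ⟨i, by simp [hu, hv]⟩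

end

/-- `G` has a `d`-simultaneous interval representation iff `G` is the
intersection of an interval graph and a graph with edge clique cover number at
most `d`. -/
theorem siRep_iff_intersection_intervalGraph_ecc {V : Type*} [Fintype V]
    (G : SimpleGraph V) (d : ℕ) :
    (∃ a b L, IsSIRep G d a b L) ↔
      ∃ F H : SimpleGraph V, IsIntervalGraph F ∧ eccNumber H ≤ d ∧ G = F ⊓ H := by
  classical
  simp only [isSIRep_iff, isIntervalGraph_iff]
  constructor
  · rintro ⟨a, b, L, hab, rfl⟩
    exact ⟨_, _, ⟨a, b, hab, rfl⟩, eccNumber_labelGraph_le L, rfl⟩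
  · rintro ⟨_, H, ⟨a, b, hab, rfl⟩, hH, rfl⟩
    obtain ⟨C, hC⟩ := exists_isEdgeCliqueCover_of_eccNumber_le hH
    exact ⟨a, b, fun v => {i | v ∈ C i}, hab, by rw [hC.labelGraph_eq]⟩
end
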